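/- arXiv:cond-mat/9911244 — 8 statements merged into one kernel-verified Lean document; each statement's English description precedes it below -/
import Mathlib

section
/- For every finite simple graph G and every complex number u, the non-backtracking edge-adjacency matrix B, the vertex adjacency matrix A, and the diagonal degree matrix D satisfy the Ihara–Bass identity (1 − u²)^{|V|} · det(I − u·B) = (1 − u²)^{|E|} · det(I − u·A + u²·(D − I)), where |V| is the number of vertices and |E| the number of unoriented edges. -/
/-!
Let `S` and `T` be the vertex-by-dart incidence matrices of tails and heads, and `J` the
permutation matrix of dart reversal. Then `B = Sᵀ T - J`, `T J = S`, `T Sᵀ = A`, `S Sᵀ = D` and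
`J² = 1`, so `(1 - u B) (1 - u J) = (1 - u²) - Sᵀ · u (T - u S)`. Moving the product to the vertex
side (Weinstein–Aronszajn, with a scalar) turns it into `u (T - u S) Sᵀ = u (A - u D)`. As `J` is a
fixed-point-free involution on the `2 |E|` darts, `det (1 - u J) = (1 - u²)^|E|`; this yields the
identity multiplied by `(1 - u²)^|E|`, and continuity removes the factor at `u = ±1`.
-/

open Matrix

variable {V : Type*}

/-- A dart `d'` follows a dart `d` without backtracking: the tail of `d'` equals the head
of `d` and `d'` is not the reversal of `d`. -/
def FollowsNB {G : SimpleGraph V} (d' d : G.Dart) : Prop :=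
  d'.fst = d.snd ∧ d' ≠ d.symm

instance {G : SimpleGraph V} [DecidableEq V] (d' d : G.Dart) : Decidable (FollowsNB d' d) :=
  inferInstanceAs (Decidable (_ ∧ _))

/-- The non-backtracking edge-adjacency matrix of a finite simple graph. -/
def nbMatrix (G : SimpleGraph V) [Fintype V] [DecidableEq V] [DecidableRel G.Adj] :
    Matrix G.Dart G.Dart ℂ :=
  fun d' d => if FollowsNB d' d then 1 else 0

namespace Matrix

variable {R m n : Type*} [CommRing R] [Fintype m] [Fintype n] [DecidableEq m] [DecidableEq n]

theorem pow_card_mul_det_smul_one_sub_mul_comm (A : Matrix m n R) (B : Matrix n m R) (t : R) :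
    t ^ Fintype.card n * det (t • 1 - A * B) = t ^ Fintype.card m * det (t • 1 - B * A) := by
  simpa only [Polynomial.eval_mul, Polynomial.eval_pow, Polynomial.eval_X, eval_charpoly,
    scalar_apply, ← smul_one_eq_diagonal] using
    congrArg (Polynomial.eval t) (charpoly_mul_comm' A B)

theorem det_one_sub_smul_permMatrix_of_involutive {ι : Type*} [Fintype ι] [DecidableEq ι]
    {σ : Equiv.Perm ι} (hσ : Function.Involutive σ) (hfix : ∀ i, σ i ≠ i) (u : R) :
    det (1 - u • σ.permMatrix R) = (1 - u ^ 2) ^ (Fintype.card ι / 2) := by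
  -- `{i // i < σ i}` picks one point from each orbit `{i, σ i}`.
  let : LinearOrder ι := LinearOrder.lift' _ (Fintype.equivFin ι).injective
  have hswap (i : ι) : i < σ i ↔ ¬ σ i < σ (σ i) := by
    rw [hσ, not_lt]
    exact ⟨le_of_lt, fun h => lt_of_le_of_ne h (hfix i).symm⟩
  let e : {i // i < σ i} ⊕ {i // i < σ i} ≃ ι :=
    (Equiv.sumCongr (Equiv.refl _) (σ.subtypeEquiv hswap)).trans (Equiv.sumCompl _)
  have he (x) : σ (e x) = e x.swap := by
    rcases x with r | r
    · rfl
    · exact hσ r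
  have hcard : Fintype.card ι = 2 * Fintype.card {i // i < σ i} := by
    rw [← Fintype.card_congr e, Fintype.card_sum, two_mul]
  calc det (1 - u • σ.permMatrix R)
      = det ((1 - u • σ.permMatrix R).submatrix e e) := (det_submatrix_equiv_self e _).symm
    _ = det (fromBlocks 1 (-u • 1) (-u • 1) 1) := by
      congr 1
      ext (a | a) (b | b) <;> simp [PEquiv.toMatrix_apply, he, e.injective.eq_iff, one_apply]
    _ = det ((1 - u ^ 2) • (1 : Matrix {i // i < σ i} {i // i < σ i} R)) := by
      rw [det_fromBlocks_one₁₁, smul_mul_smul_comm, mul_one]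
      congr 1
      module
    _ = (1 - u ^ 2) ^ (Fintype.card ι / 2) := by
      rw [det_smul, det_one, mul_one, hcard, Nat.mul_div_cancel_left _ two_pos]

end Matrix

theorem Continuous.ext_of_eval_mul_eq {𝕜 : Type*} [NontriviallyNormedField 𝕜] [CompleteSpace 𝕜]
    {f g : 𝕜 → 𝕜} (hf : Continuous f) (hg : Continuous g) {p : Polynomial 𝕜} (hp : p ≠ 0)
    (h : ∀ x, p.eval x * f x = p.eval x * g x) : f = g :=
  hf.ext_on ((Polynomial.finite_setOfPred_isRoot hp).countable.dense_compl 𝕜) hg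
    fun x hx => mul_left_cancel₀ hx (h x)

namespace SimpleGraph

variable (G : SimpleGraph V) [DecidableEq V]

def dartTailMatrix : Matrix V G.Dart ℂ := of fun x d => if d.fst = x then 1 else 0

def dartHeadMatrix : Matrix V G.Dart ℂ := of fun x d => if d.snd = x then 1 else 0

def dartSymmMatrix : Matrix G.Dart G.Dart ℂ :=
  (Function.Involutive.toPerm _ Dart.symm_involutive).permMatrix ℂ

variable [Fintype V] [DecidableRel G.Adj]

theorem sum_dart_ite_fst_eq {M : Type*} [AddCommMonoid M] (v : V) (f : V → M) :
    (∑ d : G.Dart, if d.fst = v then f d.snd else 0) = ∑ w ∈ G.neighborFinset v, f w := by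
  rw [← Finset.sum_filter, dart_fst_fiber,
    Finset.sum_image fun _ _ _ _ h => G.dartOfNeighborSet_injective v h,
    Finset.sum_subtype _ fun w => G.mem_neighborFinset v w]
  rfl

theorem nbMatrix_eq_transpose_mul_sub :
    nbMatrix G = (G.dartTailMatrix)ᵀ * G.dartHeadMatrix - G.dartSymmMatrix := by
  ext d' d
  rcases eq_or_ne d' d.symm with rfl | h <;>
    simp [nbMatrix, FollowsNB, dartTailMatrix, dartHeadMatrix, dartSymmMatrix, mul_apply,
      PEquiv.toMatrix_apply, Dart.symm_involutive.eq_iff, *]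

theorem dartSymmMatrix_mul_self : G.dartSymmMatrix * G.dartSymmMatrix = 1 := by
  rw [dartSymmMatrix, ← permMatrix_mul, show Function.Involutive.toPerm _ Dart.symm_involutive *
    Function.Involutive.toPerm _ Dart.symm_involutive = (1 : Equiv.Perm G.Dart) from
    Equiv.ext Dart.symm_symm, permMatrix_one]

theorem dartHeadMatrix_mul_dartSymmMatrix :
    G.dartHeadMatrix * G.dartSymmMatrix = G.dartTailMatrix := by
  ext x d
  simp [dartTailMatrix, dartHeadMatrix, dartSymmMatrix, mul_apply, PEquiv.toMatrix_apply,
    Dart.symm_involutive.eq_iff]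

theorem dartHeadMatrix_mul_transpose_dartTailMatrix :
    G.dartHeadMatrix * (G.dartTailMatrix)ᵀ = G.adjMatrix ℂ := by
  ext x y
  simp only [dartTailMatrix, dartHeadMatrix, mul_apply, transpose_apply, of_apply, mul_ite,
    mul_one, mul_zero]
  rw [G.sum_dart_ite_fst_eq y fun w => if w = x then (1 : ℂ) else 0]
  simp [adj_comm]

theorem dartTailMatrix_mul_transpose_self :
    G.dartTailMatrix * (G.dartTailMatrix)ᵀ = diagonal fun x => (G.degree x : ℂ) := by
  ext x y
  simp +contextual only [dartTailMatrix, mul_apply, transpose_apply, of_apply, mul_ite,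
    mul_one, mul_zero]
  rw [G.sum_dart_ite_fst_eq y fun _ => if y = x then (1 : ℂ) else 0]
  rcases eq_or_ne x y with rfl | h <;> simp [*, Ne.symm]

theorem det_one_sub_smul_dartSymmMatrix (u : ℂ) :
    det (1 - u • G.dartSymmMatrix) = (1 - u ^ 2) ^ G.edgeFinset.card := by
  rw [dartSymmMatrix, det_one_sub_smul_permMatrix_of_involutive Dart.symm_involutive Dart.symm_ne,
    dart_card_eq_twice_card_edges, Nat.mul_div_cancel_left _ two_pos]

theorem one_sub_smul_nbMatrix_mul_one_sub_smul_dartSymmMatrix (u : ℂ) :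
    (1 - u • nbMatrix G) * (1 - u • G.dartSymmMatrix) =
      (1 - u ^ 2) • 1 - (G.dartTailMatrix)ᵀ * (u • (G.dartHeadMatrix - u • G.dartTailMatrix)) := by
  rw [nbMatrix_eq_transpose_mul_sub]
  simp only [Matrix.sub_mul, Matrix.mul_sub, Matrix.smul_mul, Matrix.mul_smul, Matrix.one_mul,
    Matrix.mul_one, Matrix.mul_assoc, dartHeadMatrix_mul_dartSymmMatrix, dartSymmMatrix_mul_self]
  module

theorem smul_sub_smul_mul_transpose_dartTailMatrix (u : ℂ) :
    (u • (G.dartHeadMatrix - u • G.dartTailMatrix)) * (G.dartTailMatrix)ᵀ =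
      u • (G.adjMatrix ℂ - u • diagonal fun x => (G.degree x : ℂ)) := by
  rw [Matrix.smul_mul, Matrix.sub_mul, Matrix.smul_mul,
    dartHeadMatrix_mul_transpose_dartTailMatrix, dartTailMatrix_mul_transpose_self]

theorem pow_mul_ihara_bass (u : ℂ) :
    (1 - u ^ 2) ^ G.edgeFinset.card * ((1 - u ^ 2) ^ Fintype.card V * det (1 - u • nbMatrix G)) =
      (1 - u ^ 2) ^ G.edgeFinset.card * ((1 - u ^ 2) ^ G.edgeFinset.card *
        det (1 - u • G.adjMatrix ℂ + u ^ 2 • (diagonal (fun x => (G.degree x : ℂ)) - 1))) := by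
  calc _ = (1 - u ^ 2) ^ Fintype.card V *
        det ((1 - u • nbMatrix G) * (1 - u • G.dartSymmMatrix)) := by
        rw [det_mul, det_one_sub_smul_dartSymmMatrix]
        ring
    _ = (1 - u ^ 2) ^ Fintype.card G.Dart *
        det ((1 - u ^ 2) • 1 - u • (G.adjMatrix ℂ - u • diagonal fun x => (G.degree x : ℂ))) := by
        rw [one_sub_smul_nbMatrix_mul_one_sub_smul_dartSymmMatrix,
          pow_card_mul_det_smul_one_sub_mul_comm, smul_sub_smul_mul_transpose_dartTailMatrix]
    _ = _ := by
        rw [dart_card_eq_twice_card_edges, two_mul, pow_add, mul_assoc]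
        congr 3
        module

end SimpleGraph

/-- **Ihara–Bass identity**: for every finite simple graph `G` and every complex `u`,
`(1 − u²)^{|V|} · det(I − u·B) = (1 − u²)^{|E|} · det(I − u·A + u²·(D − I))`. -/
theorem ihara_bass (G : SimpleGraph V) [Fintype V] [DecidableEq V] [DecidableRel G.Adj]
    (u : ℂ) :
    (1 - u ^ 2) ^ (Fintype.card V) * Matrix.det (1 - u • nbMatrix G) =
      (1 - u ^ 2) ^ G.edgeFinset.card *
        Matrix.det (1 - u • G.adjMatrix ℂ +
          (u ^ 2) • (Matrix.diagonal (fun x => (G.degree x : ℂ)) - 1)) := by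
  have hp : ((1 - Polynomial.X ^ 2) ^ G.edgeFinset.card : Polynomial ℂ) ≠ 0 :=
    pow_ne_zero _ fun h => by simpa using congrArg (Polynomial.eval 0) h
  apply congrFun (Continuous.ext_of_eval_mul_eq ?_ ?_ hp fun x => ?_) u
  · fun_prop
  · fun_prop
  · simpa using G.pow_mul_ihara_bass x
end

section
/- Let G be a finite simple graph, n ≥ 1, and let U assign to every dart d an invertible n×n complex matrix such that U(reversal of d) = (U d)⁻¹. Define the block matrix J, indexed by pairs (dart, index in Fin n), whose (d',d) block equals U d if d' is the reversal of d and 0 otherwise. Then for every complex u, det(I − u·J) = (1 − u²)^{n|E|}, where |E| is the number of unoriented edges of G. -/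
/-!
Since `U d̄ U d = 1`, the matrix `J` is an involution, so
`det(1 - uJ) det(1 + uJ) = det((1 - u²) I) = (1 - u²)^{2n|E|}`. Orienting every edge and
conjugating by the diagonal matrix of signs `±1` (`+1` on darts along the orientation) turns `J`
into `-J`, so the two factors are equal. Viewed as polynomials in `u` they then agree up to sign,
and the sign is fixed by evaluating at `u = 0`.
-/

open Matrix

variable {V : Type*}

/-- The block edge-inversion matrix `J` twisted by the potential `U`: the `(d', d)` block
equals `U d` if `d'` is the reversal of `d`, and `0` otherwise. -/
def Jblock (G : SimpleGraph V) [DecidableEq V] (n : ℕ)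
    (U : G.Dart → Matrix (Fin n) (Fin n) ℂ) :
    Matrix (G.Dart × Fin n) (G.Dart × Fin n) ℂ :=
  fun p q => if p.1 = q.1.symm then U q.1 p.2 q.2 else 0

namespace Matrix

open Polynomial

variable {ι R : Type*} [Fintype ι] [DecidableEq ι] [CommRing R]

lemma eval_charpolyRev_eq_det (M : Matrix ι ι R) (u : R) :
    M.charpolyRev.eval u = det (1 - u • M) := by
  rw [charpolyRev, ← coe_evalRingHom, RingHom.map_det]
  congr 1
  ext i j
  simp only [RingHom.mapMatrix_apply, map_apply, sub_apply, smul_apply, one_apply, smul_eq_mul,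
    coe_evalRingHom, eval_sub, eval_mul, eval_X, eval_C, apply_ite (eval u), eval_one, eval_zero]

lemma charpolyRev_mul_charpolyRev_neg {M : Matrix ι ι R} (hM : M * M = 1) :
    M.charpolyRev * (-M).charpolyRev = (1 - X ^ 2) ^ Fintype.card ι := by
  have hM' : M.map C * M.map C = 1 := by
    rw [← Matrix.map_mul, hM, Matrix.map_one _ (map_zero C) (map_one C)]
  have : (1 - (X : R[X]) • M.map C) * (1 - (X : R[X]) • (-M).map C) =
      (1 - X ^ 2 : R[X]) • (1 : Matrix ι ι R[X]) := by
    rw [Matrix.map_neg _ (map_neg C), smul_neg, sub_neg_eq_add, sub_mul, one_mul, mul_add,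
      mul_one, smul_mul_smul_comm, hM', sub_smul, one_smul, sq]
    abel
  rw [charpolyRev, charpolyRev, ← det_mul, this, det_smul, det_one, mul_one]

lemma charpolyRev_neg_of_mul_mul_eq_neg {M D : Matrix ι ι R} (hD : D * D = 1)
    (hDM : D * M * D = -M) : (-M).charpolyRev = M.charpolyRev := by
  rw [← reverse_charpoly, ← reverse_charpoly, ← hDM, charpoly_mul_comm, ← mul_assoc, hD, one_mul]

lemma charpolyRev_eq_one_sub_X_sq_pow [NoZeroDivisors R] [NeZero (2 : R)] {M D : Matrix ι ι R}
    {N : ℕ} (hM : M * M = 1) (hD : D * D = 1) (hDM : D * M * D = -M)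
    (hcard : Fintype.card ι = 2 * N) : M.charpolyRev = (1 - X ^ 2) ^ N := by
  have hsq : M.charpolyRev * M.charpolyRev = (1 - X ^ 2) ^ N * (1 - X ^ 2) ^ N := by
    rw [← pow_add, ← two_mul, ← hcard, ← charpolyRev_mul_charpolyRev_neg hM,
      charpolyRev_neg_of_mul_mul_eq_neg hD hDM]
  refine (mul_self_eq_mul_self_iff.mp hsq).resolve_right fun h => ?_
  have h0 := congrArg (eval 0) h
  simp only [eval_charpolyRev, eval_neg, eval_pow, eval_sub, eval_one, eval_X] at h0
  norm_num at h0
  exact two_ne_zero (α := R) (by linear_combination h0)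

end Matrix

namespace SimpleGraph.Dart

variable [Fintype V] {G : SimpleGraph V}

noncomputable def sign (d : G.Dart) : ℂ :=
  if Fintype.equivFin V d.fst < Fintype.equivFin V d.snd then 1 else -1

lemma sign_mul_self (d : G.Dart) : d.sign * d.sign = 1 := by
  unfold sign; split <;> norm_num

lemma sign_symm (d : G.Dart) : d.symm.sign = -d.sign := by
  have hne : Fintype.equivFin V d.fst ≠ Fintype.equivFin V d.snd :=
    (Fintype.equivFin V).injective.ne d.fst_ne_snd
  rcases hne.lt_or_gt with h | h <;> simp [sign, h, h.not_gt]

end SimpleGraph.Dart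

section Jblock

variable [Fintype V] [DecidableEq V] (G : SimpleGraph V) [DecidableRel G.Adj] (n : ℕ)

noncomputable def dartSignMatrix : Matrix (G.Dart × Fin n) (G.Dart × Fin n) ℂ :=
  diagonal fun p => p.1.sign

lemma dartSignMatrix_mul_self : dartSignMatrix G n * dartSignMatrix G n = 1 := by
  simp [dartSignMatrix, diagonal_mul_diagonal, SimpleGraph.Dart.sign_mul_self]

lemma dartSignMatrix_mul_Jblock_mul (U : G.Dart → Matrix (Fin n) (Fin n) ℂ) :
    dartSignMatrix G n * Jblock G n U * dartSignMatrix G n = -Jblock G n U := by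
  ext p q
  rw [dartSignMatrix, mul_diagonal, diagonal_mul, neg_apply, Jblock]
  split_ifs with h
  · rw [h, SimpleGraph.Dart.sign_symm]
    linear_combination (-U q.1 p.2 q.2) * q.1.sign_mul_self
  · simp

lemma Jblock_mul_self {U : G.Dart → Matrix (Fin n) (Fin n) ℂ} (hU : ∀ d, U d.symm * U d = 1) :
    Jblock G n U * Jblock G n U = 1 := by
  ext p q
  simp only [Jblock, mul_apply, one_apply, Fintype.sum_prod_type, mul_ite, ite_mul, zero_mul,
    mul_zero, Finset.sum_ite_irrel, Finset.sum_const_zero, Finset.sum_ite_eq', Finset.mem_univ,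
    if_true, SimpleGraph.Dart.symm_symm]
  rw [← mul_apply, hU]
  by_cases h : p.1 = q.1 <;> simp [h, one_apply, Prod.ext_iff]

end Jblock

theorem det_one_sub_smul_Jblock_general (G : SimpleGraph V) [Fintype V] [DecidableEq V]
    [DecidableRel G.Adj] (n : ℕ)
    (U : G.Dart → Matrix (Fin n) (Fin n) ℂ)
    (hUinv : ∀ d, IsUnit (U d)) (hUrev : ∀ d, U d.symm = (U d)⁻¹) (u : ℂ) :
    Matrix.det (1 - u • Jblock G n U) = (1 - u ^ 2) ^ (n * G.edgeFinset.card) := by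
  have hU : ∀ d, U d.symm * U d = 1 := fun d => by
    rw [hUrev, nonsing_inv_mul _ ((isUnit_iff_isUnit_det _).mp (hUinv d))]
  have hcard : Fintype.card (G.Dart × Fin n) = 2 * (n * G.edgeFinset.card) := by
    rw [Fintype.card_prod, Fintype.card_fin, G.dart_card_eq_twice_card_edges]
    ring
  rw [← eval_charpolyRev_eq_det, charpolyRev_eq_one_sub_X_sq_pow (Jblock_mul_self G n hU)
    (dartSignMatrix_mul_self G n) (dartSignMatrix_mul_Jblock_mul G n U) hcard]
  simp

/-- `det(I − u·J) = (1 − u²)^{n|E|}` for a unitary-type potential `U` on darts. -/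
theorem det_one_sub_smul_Jblock (G : SimpleGraph V) [Fintype V] [DecidableEq V]
    [DecidableRel G.Adj] (n : ℕ) (hn : 1 ≤ n)
    (U : G.Dart → Matrix (Fin n) (Fin n) ℂ)
    (hUinv : ∀ d, IsUnit (U d)) (hUrev : ∀ d, U d.symm = (U d)⁻¹) (u : ℂ) :
    Matrix.det (1 - u • Jblock G n U) = (1 - u ^ 2) ^ (n * G.edgeFinset.card) :=
  det_one_sub_smul_Jblock_general G n U hUinv hUrev u
end

section
/- For every finite simple graph G and every integer m ≥ 1, the trace of the m-th power of the non-backtracking edge-adjacency matrix B satisfies trace(B^m) = Σ_{l | m} l · N_l, where the sum runs over the positive divisors l of m and N_l is the number of primitive cycle classes of length l. -/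
open Matrix

variable {V : Type*}

/-- A closed non-backtracking cycle of length `m`. -/
def IsNBCycle (G : SimpleGraph V) {m : ℕ} (c : ZMod m → G.Dart) : Prop :=
  ∀ i, FollowsNB (c (i + 1)) (c i)

/-- A cycle is primitive if it is not the repetition of a cycle of shorter length
`l` properly dividing `m`. -/
def IsPrimitiveCycle (G : SimpleGraph V) {m : ℕ} (c : ZMod m → G.Dart) : Prop :=
  ¬ ∃ (l : ℕ) (h : l ∣ m), l < m ∧ ∃ c' : ZMod l → G.Dart,
      IsNBCycle G c' ∧ c = c' ∘ (ZMod.castHom h (ZMod l))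

/-- Primitive closed non-backtracking cycles of length `m`. -/
def PrimCycle (G : SimpleGraph V) (m : ℕ) :=
  {c : ZMod m → G.Dart // IsNBCycle G c ∧ IsPrimitiveCycle G c}

/-- Two cycles are equivalent iff one is a rotation of the other. -/
def rotSetoid (G : SimpleGraph V) (m : ℕ) : Setoid (PrimCycle G m) where
  r c c' := ∃ k : ZMod m, ∀ i, c'.1 i = c.1 (i + k)
  iseqv := by
    constructor
    · exact fun c => ⟨0, fun i => by rw [add_zero]⟩
    · rintro c c' ⟨k, hk⟩
      refine ⟨-k, fun i => ?_⟩
      rw [hk]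
      ring_nf
    · rintro c c' c'' ⟨k, hk⟩ ⟨k', hk'⟩
      refine ⟨k' + k, fun i => ?_⟩
      rw [hk', hk]
      ring_nf

/-- Rotation-classes of primitive cycles of length `m`. -/
def PrimClass (G : SimpleGraph V) (m : ℕ) := Quotient (rotSetoid G m)

/-!
Expanding the matrix power, `trace (B ^ m)` counts the closed non-backtracking cycles
`c : ZMod m → G.Dart`. Such a cycle has a least period `l`, which divides `m`, and is the
`m / l`-fold repetition of a unique primitive cycle of length `l`; so the cycles of length `m`
number `∑_{l ∣ m} #(primitive cycles of length l)`. Rotation is a free action of `ZMod l` on the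
primitive cycles of length `l` whose orbits are the primitive cycle classes, so there are
`l * N_l` primitive cycles of length `l`.
-/

open Function

theorem Matrix.pow_apply_eq_sum_walks {ι R : Type*} [Fintype ι] [DecidableEq ι] [CommSemiring R]
    (A : Matrix ι ι R) (n : ℕ) (i j : ι) :
    (A ^ n) i j = ∑ f : Fin (n + 1) → ι,
      if f (Fin.last n) = i ∧ f 0 = j then ∏ k : Fin n, A (f k.succ) (f k.castSucc) else 0 := by
  induction n generalizing i with
  | zero =>
    rw [← (Equiv.funUnique (Fin 1) ι).symm.sum_comp]
    simp [one_apply, eq_comm, ite_and]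
  | succ n ih =>
    rw [pow_succ', mul_apply, ← (Fin.snocEquiv fun _ => ι).sum_comp, Fintype.sum_prod_type_right]
    simp only [ih, ite_and, Finset.mul_sum, mul_ite, mul_zero, Fin.snocEquiv_apply, Fin.snoc_last,
      Fin.snoc_apply_zero, Fin.snoc_castSucc, Fin.prod_univ_castSucc, Fin.succ_last,
      Finset.sum_ite_eq', Finset.mem_univ, if_true]
    rw [Finset.sum_comm]
    simp only [Fin.succ_castSucc, Fin.snoc_castSucc]
    simp [mul_comm]

theorem Fin.snoc_self_zero_succ {α : Type*} {n : ℕ} (c : Fin (n + 1) → α) (k : Fin (n + 1)) :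
    (Fin.snoc c (c 0) : Fin (n + 2) → α) k.succ = c (k + 1) := by
  induction k using Fin.lastCases with
  | last => simp
  | cast k => rw [Fin.succ_castSucc, Fin.snoc_castSucc, Fin.coeSucc_eq_succ]

theorem Matrix.trace_pow_eq_sum_cycles {ι R : Type*} [Fintype ι] [DecidableEq ι] [CommSemiring R]
    (A : Matrix ι ι R) (m : ℕ) [NeZero m] :
    trace (A ^ m) = ∑ c : ZMod m → ι, ∏ x, A (c (x + 1)) (c x) := by
  obtain ⟨n, rfl⟩ := Nat.exists_eq_succ_of_ne_zero (NeZero.ne m)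
  have closed_walks : trace (A ^ (n + 1)) = ∑ c : Fin (n + 1) → ι, ∏ k, A (c (k + 1)) (c k) := by
    simp only [trace, diag, pow_apply_eq_sum_walks]
    rw [Finset.sum_comm, ← (Fin.snocEquiv fun _ => ι).sum_comp, Fintype.sum_prod_type_right]
    simp [ite_and, Fin.snoc_self_zero_succ]
  rw [closed_walks, ← ((ZMod.finEquiv (n + 1)).toEquiv.arrowCongr (Equiv.refl ι)).sum_comp]
  refine Fintype.sum_congr _ _ fun c => ?_
  rw [← (ZMod.finEquiv (n + 1)).toEquiv.prod_comp]
  simp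

section MinPeriod

variable {α : Type*} {m : ℕ}

theorem Function.Periodic.natCast_gcd {c : ZMod m → α} {p q : ℕ}
    (hp : Periodic c (p : ZMod m)) (hq : Periodic c (q : ZMod m)) :
    Periodic c ((p.gcd q : ℕ) : ZMod m) := by
  rw [← Int.cast_natCast, Nat.gcd_eq_gcd_ab]
  push_cast
  rw [mul_comm (p : ZMod m), mul_comm (q : ZMod m)]
  exact (hp.int_mul _).add_period (hq.int_mul _)

noncomputable def minPeriod (c : ZMod m → α) : ℕ :=
  sInf {p | 0 < p ∧ Periodic c (p : ZMod m)}

theorem minPeriod_comp_add_const (c : ZMod m → α) (k : ZMod m) :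
    minPeriod (fun x => c (x + k)) = minPeriod c := by
  have periodic_iff (p : ZMod m) : Periodic (fun x => c (x + k)) p ↔ Periodic c p :=
    ⟨fun h => by simpa using h.add_const (-k), fun h => h.add_const k⟩
  simp only [minPeriod, periodic_iff]

variable [NeZero m] (c : ZMod m → α)

theorem minPeriod_mem : 0 < minPeriod c ∧ Periodic c (minPeriod c : ZMod m) :=
  Nat.sInf_mem (s := {p | 0 < p ∧ Periodic c (p : ZMod m)})
    ⟨m, Nat.pos_of_neZero m, by simp [Periodic]⟩

theorem periodic_natCast_iff_minPeriod_dvd {p : ℕ} :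
    Periodic c (p : ZMod m) ↔ minPeriod c ∣ p := by
  obtain ⟨hpos, hper⟩ := minPeriod_mem c
  constructor
  · intro hp
    rcases Nat.eq_zero_or_pos p with rfl | hp0
    · exact dvd_zero _
    have hle : minPeriod c ≤ p.gcd (minPeriod c) :=
      Nat.sInf_le ⟨Nat.gcd_pos_of_pos_left _ hp0, hp.natCast_gcd hper⟩
    exact Nat.gcd_eq_right_iff_dvd.mp (le_antisymm (Nat.gcd_le_right _ hpos) hle)
  · rintro ⟨k, rfl⟩
    simpa [mul_comm] using hper.nat_mul k

theorem minPeriod_pos : 0 < minPeriod c := (minPeriod_mem c).1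

theorem minPeriod_dvd : minPeriod c ∣ m :=
  (periodic_natCast_iff_minPeriod_dvd c).mp (by simp [Periodic])

end MinPeriod

section CastHom

variable {α : Type*} {m l : ℕ} (h : l ∣ m)

theorem periodic_comp_castHom_iff (c : ZMod l → α) (p : ℕ) :
    Periodic (c ∘ ZMod.castHom h (ZMod l)) (p : ZMod m) ↔ Periodic c (p : ZMod l) := by
  simp only [Periodic, (ZMod.castHom_surjective h).forall, Function.comp_apply, ← map_natCast
    (ZMod.castHom h (ZMod l)) p, ← map_add]

theorem minPeriod_comp_castHom (c : ZMod l → α) :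
    minPeriod (c ∘ ZMod.castHom h (ZMod l)) = minPeriod c := by
  simp only [minPeriod, periodic_comp_castHom_iff]

theorem Function.Periodic.eq_of_castHom_eq {c : ZMod m → α} (hc : Periodic c (l : ZMod m))
    {x y : ZMod m} (hxy : ZMod.castHom h (ZMod l) x = ZMod.castHom h (ZMod l) y) : c x = c y := by
  obtain ⟨a, rfl⟩ := ZMod.intCast_surjective x
  obtain ⟨b, rfl⟩ := ZMod.intCast_surjective y
  simp only [map_intCast, ZMod.intCast_eq_intCast_iff_dvd_sub] at hxy
  obtain ⟨k, hk⟩ := hxy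
  have hb : (b : ZMod m) = a + k * l := by
    rw [eq_add_of_sub_eq' hk]
    push_cast
    ring
  rw [hb, hc.int_mul k a]

theorem Function.Periodic.exists_eq_comp_castHom {c : ZMod m → α}
    (hc : Periodic c (l : ZMod m)) : ∃ c' : ZMod l → α, c = c' ∘ ZMod.castHom h (ZMod l) :=
  have hsurj := ZMod.castHom_surjective h
  ⟨c ∘ surjInv hsurj, funext fun _ => hc.eq_of_castHom_eq h (surjInv_eq hsurj _).symm⟩

end CastHom

section NBCycle

variable {G : SimpleGraph V}

theorem isNBCycle_comp_castHom_iff {m l : ℕ} (h : l ∣ m) {c : ZMod l → G.Dart} :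
    IsNBCycle G (c ∘ ZMod.castHom h (ZMod l)) ↔ IsNBCycle G c := by
  simp only [IsNBCycle, (ZMod.castHom_surjective h).forall, Function.comp_apply, ← map_one
    (ZMod.castHom h (ZMod l)), ← map_add]

theorem IsNBCycle.comp_add_const {m : ℕ} {c : ZMod m → G.Dart} (hc : IsNBCycle G c) (k : ZMod m) :
    IsNBCycle G (fun x => c (x + k)) := fun x => by
  simpa only [add_right_comm] using hc (x + k)

theorem isPrimitiveCycle_iff_minPeriod_eq {m : ℕ} [NeZero m] {c : ZMod m → G.Dart}
    (hc : IsNBCycle G c) : IsPrimitiveCycle G c ↔ minPeriod c = m := by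
  have factors_iff : ∀ l (h : l ∣ m),
      (∃ c', IsNBCycle G c' ∧ c = c' ∘ ZMod.castHom h (ZMod l)) ↔ minPeriod c ∣ l := by
    intro l h
    rw [← periodic_natCast_iff_minPeriod_dvd]
    constructor
    · rintro ⟨c', -, rfl⟩
      rw [periodic_comp_castHom_iff]
      simp [Periodic]
    · intro hper
      obtain ⟨c', rfl⟩ := hper.exists_eq_comp_castHom h
      exact ⟨c', (isNBCycle_comp_castHom_iff h).mp hc, rfl⟩
  constructor
  · intro hprim
    by_contra hne
    exact hprim ⟨minPeriod c, minPeriod_dvd c,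
      (Nat.le_of_dvd (Nat.pos_of_neZero m) (minPeriod_dvd c)).lt_of_ne hne,
      (factors_iff _ _).mpr dvd_rfl⟩
  · rintro heq ⟨l, h, hlt, hfac⟩
    have hl : 0 < l := Nat.pos_of_dvd_of_pos h (Nat.pos_of_neZero m)
    exact hlt.not_ge (Nat.le_of_dvd hl (heq ▸ (factors_iff l h).mp hfac))

end NBCycle

section Counting

variable {G : SimpleGraph V}

theorem IsPrimitiveCycle.comp_add_const {m : ℕ} [NeZero m] {c : ZMod m → G.Dart}
    (hc : IsNBCycle G c) (hp : IsPrimitiveCycle G c) (k : ZMod m) :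
    IsPrimitiveCycle G (fun x => c (x + k)) := by
  rwa [isPrimitiveCycle_iff_minPeriod_eq (hc.comp_add_const k), minPeriod_comp_add_const,
    ← isPrimitiveCycle_iff_minPeriod_eq hc]

theorem PrimCycle.minPeriod_eq {l : ℕ} [NeZero l] (c : PrimCycle G l) : minPeriod c.1 = l :=
  (isPrimitiveCycle_iff_minPeriod_eq c.2.1).mp c.2.2

instance PrimCycle.instAddAction {l : ℕ} [NeZero l] : AddAction (ZMod l) (PrimCycle G l) where
  vadd k c := ⟨fun x => c.1 (x + k), c.2.1.comp_add_const k, c.2.2.comp_add_const c.2.1 k⟩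
  zero_vadd c := Subtype.ext <| funext fun x => congrArg c.1 (add_zero x)
  add_vadd k k' c := Subtype.ext <| funext fun x => congrArg c.1 (by ring)

theorem PrimCycle.vadd_apply {l : ℕ} [NeZero l] (k : ZMod l) (c : PrimCycle G l) (x : ZMod l) :
    (k +ᵥ c).1 x = c.1 (x + k) := rfl

theorem PrimCycle.stabilizer_eq_bot {l : ℕ} [NeZero l] (c : PrimCycle G l) :
    AddAction.stabilizer (ZMod l) c = ⊥ := by
  refine (AddSubgroup.eq_bot_iff_forall _).mpr fun k hk => ?_
  have hper : Periodic c.1 ((k.val : ℕ) : ZMod l) := by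
    rw [ZMod.natCast_zmod_val]
    exact fun x => (PrimCycle.vadd_apply k c x).symm.trans (congrFun (congrArg Subtype.val hk) x)
  rw [periodic_natCast_iff_minPeriod_dvd, c.minPeriod_eq] at hper
  rw [← ZMod.natCast_zmod_val k, ZMod.natCast_eq_zero_iff]
  exact hper

theorem rotSetoid_eq_orbitRel {l : ℕ} [NeZero l] :
    rotSetoid G l = AddAction.orbitRel (ZMod l) (PrimCycle G l) := by
  refine Setoid.ext fun a b => ?_
  rw [Setoid.comm', AddAction.orbitRel_apply, AddAction.mem_orbit_iff]
  refine exists_congr fun k => ⟨fun h => Subtype.ext (funext fun x => (h x).symm), ?_⟩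
  rintro rfl x
  rfl

theorem card_primCycle_eq_mul_card_primClass {l : ℕ} [NeZero l] :
    Nat.card (PrimCycle G l) = l * Nat.card (PrimClass G l) := by
  rw [Nat.card_congr (AddAction.selfEquivOrbitsQuotientProd PrimCycle.stabilizer_eq_bot),
    Nat.card_prod, Nat.card_zmod, PrimClass, rotSetoid_eq_orbitRel, mul_comm]

instance Nat.neZero_of_mem_divisors {m : ℕ} (l : m.divisors) : NeZero (l : ℕ) :=
  ⟨(Nat.pos_of_mem_divisors l.2).ne'⟩

theorem card_isNBCycle_eq_sum_card_primCycle [Finite V] (m : ℕ) [NeZero m] :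
    Nat.card {c : ZMod m → G.Dart // IsNBCycle G c} =
      ∑ l ∈ m.divisors, Nat.card (PrimCycle G l) := by
  have : Finite G.Dart := Finite.of_injective _ SimpleGraph.Dart.toProd_injective
  let repeatCycle : (Σ l : m.divisors, PrimCycle G l) → {c : ZMod m → G.Dart // IsNBCycle G c} :=
    fun ⟨l, c⟩ => ⟨c.1 ∘ ZMod.castHom (Nat.dvd_of_mem_divisors l.2) (ZMod l),
      (isNBCycle_comp_castHom_iff _).mpr c.2.1⟩
  have injective : Injective repeatCycle := by
    rintro ⟨l₁, c₁⟩ ⟨l₂, c₂⟩ heq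
    have hc : c₁.1 ∘ _ = c₂.1 ∘ _ := congrArg Subtype.val heq
    obtain rfl : l₁ = l₂ := by
      have := congrArg minPeriod hc
      rwa [minPeriod_comp_castHom, minPeriod_comp_castHom, c₁.minPeriod_eq, c₂.minPeriod_eq,
        Subtype.coe_inj] at this
    obtain rfl : c₁ = c₂ := Subtype.ext ((ZMod.castHom_surjective _).injective_comp_right hc)
    rfl
  have surjective : Surjective repeatCycle := by
    rintro ⟨c, hc⟩
    have : NeZero (minPeriod c) := ⟨(minPeriod_pos c).ne'⟩
    obtain ⟨c', hc'⟩ := (minPeriod_mem c).2.exists_eq_comp_castHom (minPeriod_dvd c)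
    have hnb : IsNBCycle G c' := (isNBCycle_comp_castHom_iff _).mp (hc' ▸ hc)
    have hprim : IsPrimitiveCycle G c' := by
      rw [isPrimitiveCycle_iff_minPeriod_eq hnb, ← minPeriod_comp_castHom (minPeriod_dvd c), ← hc']
    exact ⟨⟨⟨minPeriod c, Nat.mem_divisors.mpr ⟨minPeriod_dvd c, NeZero.ne m⟩⟩, c', hnb, hprim⟩,
      Subtype.ext hc'.symm⟩
  have (l : m.divisors) : Finite (PrimCycle G l) := Subtype.finite
  rw [← Nat.card_congr (Equiv.ofBijective _ ⟨injective, surjective⟩), Nat.card_sigma,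
    Finset.sum_coe_sort m.divisors fun l => Nat.card (PrimCycle G l)]

theorem trace_nbMatrix_pow_eq_card_isNBCycle (G : SimpleGraph V) [Fintype V] [DecidableEq V]
    [DecidableRel G.Adj] (m : ℕ) [NeZero m] :
    trace (nbMatrix G ^ m) = Nat.card {c : ZMod m → G.Dart // IsNBCycle G c} := by
  rw [trace_pow_eq_sum_cycles]
  simp only [nbMatrix, Finset.prod_boole, Finset.mem_univ, true_implies, Finset.sum_boole,
    Nat.card_eq_fintype_card, Fintype.card_subtype, IsNBCycle]

end Counting

/-- **Trace formula for the non-backtracking matrix**: for every `m ≥ 1`,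
`trace(B^m) = Σ_{l | m} l · N_l` where `N_l` is the number of primitive cycle classes
of length `l`. -/
theorem trace_nbMatrix_pow (G : SimpleGraph V) [Fintype V] [DecidableEq V]
    [DecidableRel G.Adj] (m : ℕ) (hm : 1 ≤ m) :
    Matrix.trace (nbMatrix G ^ m) =
      ∑ l ∈ m.divisors, (l : ℂ) * (Nat.card (PrimClass G l) : ℂ) := by
  have : NeZero m := ⟨by omega⟩
  rw [trace_nbMatrix_pow_eq_card_isNBCycle, card_isNBCycle_eq_sum_card_primCycle, Nat.cast_sum]
  refine Finset.sum_congr rfl fun l hl => ?_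
  have : NeZero l := Nat.neZero_of_mem_divisors ⟨l, hl⟩
  rw [card_primCycle_eq_mul_card_primClass, Nat.cast_mul]
end

section
/- Let G be a connected acyclic locally finite simple graph (a locally finite tree) and let α be a complex number. Then for all vertices x and y: α^{dist(x,y)} − α · Σ_{z adjacent to x} α^{dist(z,y)} + α²·(deg x − 1)·α^{dist(x,y)} = (1 − α²)·[x = y]. In other words, for each fixed y the function x ↦ α^{dist(x,y)} is annihilated by Δ(α) = I − α·M₁ + α²·Q away from y, and Δ(α) applied to it at y gives 1 − α²; i.e., the kernel K(x,y) = α^{dist(x,y)} satisfies Δ(α)·K = (1 − α²)·I. -/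
open Matrix

variable {V : Type*}

/-- On a locally finite tree, the kernel `K(x,y) = α^{dist(x,y)}` satisfies
`Δ(α)·K = (1 − α²)·I`, i.e. for all vertices `x, y`:
`α^{d(x,y)} − α·Σ_{z ~ x} α^{d(z,y)} + α²·(deg x − 1)·α^{d(x,y)} = (1 − α²)·[x = y]`. -/
theorem tree_kernel_identity (G : SimpleGraph V) [G.LocallyFinite] [DecidableEq V]
    (hconn : G.Connected) (hacyc : G.IsAcyclic) (α : ℂ) :
    ∀ x y : V,
      α ^ G.dist x y - α * (∑ z ∈ G.neighborFinset x, α ^ G.dist z y)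
          + α ^ 2 * ((G.degree x : ℂ) - 1) * α ^ G.dist x y
        = (1 - α ^ 2) * (if x = y then 1 else 0) := by
  intro x y
  by_cases hxy : x = y
  · subst hxy
    have hsum : ∀ z ∈ G.neighborFinset x, α ^ G.dist z x = α := by
      intro z hz
      rw [SimpleGraph.mem_neighborFinset] at hz
      rw [SimpleGraph.dist_eq_one_iff_adj.mpr hz.symm, pow_one]
    rw [Finset.sum_congr rfl hsum, Finset.sum_const,
      SimpleGraph.card_neighborFinset_eq_degree, nsmul_eq_mul,
      SimpleGraph.dist_self, pow_zero, if_pos rfl]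
    ring
  · obtain ⟨p, hp, hlen⟩ := hconn.exists_path_of_dist x y
    cases p with
    | nil => exact absurd rfl hxy
    | @cons _ z₀ _ h q =>
      rw [SimpleGraph.Walk.length_cons] at hlen
      set k := q.length with hk
      have hd : G.dist x y = k + 1 := hlen.symm
      have hz₀dist : G.dist z₀ y = k := by
        have h1 : G.dist z₀ y ≤ k := SimpleGraph.dist_le q
        have h2 : G.dist x y ≤ G.dist x z₀ + G.dist z₀ y := hconn.dist_triangle
        have h3 : G.dist x z₀ = 1 := SimpleGraph.dist_eq_one_iff_adj.mpr h
        omega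
      have key : ∀ z, G.Adj x z → z ≠ z₀ → G.dist z y = k + 2 := by
        intro z hadj hz
        have hle : G.dist z y ≤ k + 2 := by
          have h2 : G.dist z y ≤ G.dist z x + G.dist x y := hconn.dist_triangle
          have h3 : G.dist z x = 1 := SimpleGraph.dist_eq_one_iff_adj.mpr hadj.symm
          omega
        by_contra hne
        have hlt : G.dist z y ≤ k + 1 := by omega
        obtain ⟨r, hr, hrlen⟩ := hconn.exists_path_of_dist z y
        by_cases hx : x ∈ r.support
        · have hspec := r.take_spec hx
          have hlen2 : (r.takeUntil x hx).length + (r.dropUntil x hx).length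
              = r.length := by
            rw [← SimpleGraph.Walk.length_append, hspec]
          have htake : (r.takeUntil x hx).length ≠ 0 := by
            intro h0
            exact hadj.ne' (SimpleGraph.Walk.eq_of_length_eq_zero h0)
          have hdrop : G.dist x y ≤ (r.dropUntil x hx).length :=
            SimpleGraph.dist_le _
          omega
        · have hpath : (SimpleGraph.Walk.cons hadj r).IsPath := hr.cons hx
          have hequ := hacyc.path_unique ⟨SimpleGraph.Walk.cons hadj r, hpath⟩
            ⟨SimpleGraph.Walk.cons h q, hp⟩
          have hsup := congrArg (fun P : G.Path x y => P.1.support) hequ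
          simp only [SimpleGraph.Walk.support_cons] at hsup
          rw [r.support_eq_cons, q.support_eq_cons] at hsup
          simp only [List.cons.injEq] at hsup
          exact hz hsup.2.1
      have hz₀mem : z₀ ∈ G.neighborFinset x := (SimpleGraph.mem_neighborFinset G x z₀).mpr h
      have hdeg : 1 ≤ G.degree x := by
        rw [← SimpleGraph.card_neighborFinset_eq_degree]
        exact Finset.card_pos.mpr ⟨z₀, hz₀mem⟩
      have herase : ∀ z ∈ (G.neighborFinset x).erase z₀,
          α ^ G.dist z y = α ^ (k + 2) := by
        intro z hz
        obtain ⟨hzne, hzmem⟩ := Finset.mem_erase.mp hz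
        rw [key z ((SimpleGraph.mem_neighborFinset G x z).mp hzmem) hzne]
      rw [← Finset.add_sum_erase _ _ hz₀mem, Finset.sum_congr rfl herase,
        Finset.sum_const, Finset.card_erase_of_mem hz₀mem,
        SimpleGraph.card_neighborFinset_eq_degree, nsmul_eq_mul,
        Nat.cast_sub hdeg, hd, hz₀dist, if_neg hxy]
      push_cast
      ring
end

section
/- Let G be a finite simple graph with maximal vertex degree Δ, and let u be a complex number with |u|·(Δ − 1) < 1 and |u| < 1. For n ≥ 0 let M̃ₙ(x,y) be the number of non-backtracking walks of length n from x to y. Then for all vertices x, y the series K(x,y) = Σ_{n ≥ 0} uⁿ·M̃ₙ(x,y) converges absolutely, and the resulting matrix K satisfies (I − u·A + u²·(D − I))·K = (1 − u²)·I, where A is the adjacency matrix and D the diagonal degree matrix. -/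
/-!
Let `Mₙ` be the matrix of non-backtracking walk counts. Prepending a step `x → z` to a
non-backtracking walk of length `n + 1` from `z` gives either a non-backtracking walk of length
`n + 2` from `x`, or a walk that immediately returns to `x` and then continues along a
non-backtracking walk of length `n` from `x` whose first step is not to `z`. Summing over the
neighbours `z` of `x`, every walk of length `n ≥ 1` from `x` is counted `deg x - 1` times, so
`A Mₙ₊₂ = Mₙ₊₃ + (D - I) Mₙ₊₁`, while `A M₁ = M₂ + D` and `M₁ = A`, `M₀ = I`. With this
recurrence the coefficients of `(I - uA + u²(D - I)) Σ uⁿ Mₙ` vanish beyond degree two, leaving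
`(1 - u²) I`. Absolute convergence comes from `M̃ₙ₊₁(x, y) ≤ Δ (Δ - 1)ⁿ`: after the first step a
non-backtracking walk has at most `Δ - 1` choices at each vertex.
-/

open Matrix

variable {V : Type*}

/-- The number of non-backtracking walks of length `n` from `x` to `y`. -/
noncomputable def nbWalkCount (G : SimpleGraph V) (n : ℕ) (x y : V) : ℕ :=
  Nat.card {w : Fin (n + 1) → V //
    w 0 = x ∧ w (Fin.last n) = y ∧
    (∀ (i : ℕ) (h : i + 1 ≤ n), G.Adj (w ⟨i, by omega⟩) (w ⟨i + 1, by omega⟩)) ∧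
    (∀ (i : ℕ) (h : i + 2 ≤ n), w ⟨i + 2, by omega⟩ ≠ w ⟨i, by omega⟩)}

open Finset

def deformedLaplacian {𝕜 R : Type*} [Monoid 𝕜] [Ring R] [SMul 𝕜 R] (u : 𝕜) (A D : R) : R :=
  1 - u • A + u ^ 2 • (D - 1)

theorem deformedLaplacian_mul_eq_of_hasSum {𝕜 R : Type*} [CommRing 𝕜] [Ring R] [Algebra 𝕜 R]
    [TopologicalSpace R] [IsTopologicalRing R] [ContinuousConstSMul 𝕜 R] [T2Space R]
    {A D K : R} {M : ℕ → R} {u : 𝕜} (hK : HasSum (fun n => u ^ n • M n) K)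
    (h0 : M 0 = 1) (h1 : M 1 = A) (h2 : A * M 1 = M 2 + D)
    (hrec : ∀ n, A * M (n + 2) = M (n + 3) + (D - 1) * M (n + 1)) :
    deformedLaplacian u A D * K = (1 - u ^ 2) • 1 := by
  rw [deformedLaplacian]
  -- Starting all three series at degree `3`, the recurrence cancels them termwise; what is left
  -- are the terms of degree at most `2`.
  have hK3 := (hasSum_nat_add_iff' 3).2 hK
  have hAK := ((hasSum_nat_add_iff' 2).2 hK).mul_left A
  have hDK := ((hasSum_nat_add_iff' 1).2 hK).mul_left (D - 1)
  have hlow := ((hK3.sub (hAK.const_smul u)).add (hDK.const_smul (u ^ 2))).unique (by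
    convert hasSum_zero with n
    rw [mul_smul_comm, mul_smul_comm, hrec]
    module)
  rw [h1] at h2
  simp only [sum_range_succ, sum_range_zero, h0, h1, pow_zero, one_smul, pow_one, zero_add,
    mul_sub, sub_mul, add_mul, mul_add, mul_one, one_mul, mul_smul_comm, smul_mul_assoc, h2]
    at hlow ⊢
  linear_combination (norm := module) hlow

namespace SimpleGraph

def nbWalks (G : SimpleGraph V) (n : ℕ) (x y : V) : Type _ :=
  {w : Fin (n + 1) → V //
    w 0 = x ∧ w (Fin.last n) = y ∧
    (∀ (i : ℕ) (h : i + 1 ≤ n), G.Adj (w ⟨i, by omega⟩) (w ⟨i + 1, by omega⟩)) ∧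
    (∀ (i : ℕ) (h : i + 2 ≤ n), w ⟨i + 2, by omega⟩ ≠ w ⟨i, by omega⟩)}

instance [Finite V] (G : SimpleGraph V) (n : ℕ) (x y : V) : Finite (G.nbWalks n x y) :=
  Subtype.finite

/-- Non-backtracking walks of length `n` from `z` to `y` that can follow a step `x → z`. -/
noncomputable def nbWalkCountAfter (G : SimpleGraph V) (n : ℕ) (x z y : V) : ℕ :=
  Nat.card {w : G.nbWalks n z y // ∀ h : 1 ≤ n, w.1 ⟨1, by omega⟩ ≠ x}

noncomputable def nbWalkMatrix (G : SimpleGraph V) (R : Type*) [NatCast R] (n : ℕ) : Matrix V V R :=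
  of fun x y => (nbWalkCount G n x y : R)

variable {G : SimpleGraph V} {R : Type*}

lemma nbWalkCount_eq_card (n : ℕ) (x y : V) : nbWalkCount G n x y = Nat.card (G.nbWalks n x y) :=
  rfl

lemma nbWalkCount_zero [DecidableEq V] (x y : V) :
    nbWalkCount G 0 x y = if x = y then 1 else 0 := by
  split_ifs with h
  · subst h
    refine Nat.card_eq_one_iff_unique.2
      ⟨⟨fun ⟨w, hw, _⟩ ⟨v, hv, _⟩ => ?_⟩, ⟨⟨fun _ => x, rfl, rfl, by omega, by omega⟩⟩⟩
    apply Subtype.ext; funext i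
    rw [Fin.fin_one_eq_zero i]
    exact hw.trans hv.symm
  · rw [nbWalkCount_eq_card, Nat.card_eq_zero]
    exact .inl ⟨fun ⟨w, hw, hw', _⟩ => h (hw ▸ hw')⟩

lemma nbWalkMatrix_zero [DecidableEq V] [NonAssocSemiring R] : G.nbWalkMatrix R 0 = 1 := by
  ext x y
  simp [nbWalkMatrix, nbWalkCount_zero, one_apply]

lemma nbWalkCountAfter_zero (x z y : V) : G.nbWalkCountAfter 0 x z y = nbWalkCount G 0 z y :=
  Nat.card_congr (Equiv.subtypeUnivEquiv fun _ h => absurd h (by omega))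

def nbWalksSuccFiberEquiv (n : ℕ) {x y z : V} (hxz : G.Adj x z) :
    {w : G.nbWalks (n + 1) x y // w.1 ⟨1, by omega⟩ = z} ≃
      {w : G.nbWalks n z y // ∀ h : 1 ≤ n, w.1 ⟨1, by omega⟩ ≠ x} where
  toFun p :=
    ⟨⟨Fin.tail p.1.1, p.2, p.1.2.2.1, fun i _ => p.1.2.2.2.1 (i + 1) (by omega),
      fun i _ => p.1.2.2.2.2 (i + 1) (by omega)⟩,
     fun _ e => p.1.2.2.2.2 0 (by omega) (e.trans p.1.2.1.symm)⟩
  invFun q :=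
    ⟨⟨Fin.cons x q.1.1, rfl, q.1.2.2.1,
      by
        rintro (_ | i) _
        · show G.Adj x (q.1.1 0)
          rw [q.1.2.1]
          exact hxz
        · exact q.1.2.2.2.1 i (by omega),
      by
        rintro (_ | i) _
        · exact q.2 (by omega)
        · exact q.1.2.2.2.2 i (by omega)⟩,
     q.1.2.1⟩
  left_inv p := by
    apply Subtype.ext; apply Subtype.ext
    funext i
    exact Fin.cases p.1.2.1.symm (fun _ => rfl) i
  right_inv q := rfl

variable [DecidableRel G.Adj]

lemma card_nbWalks_succ_fiber (n : ℕ) (x y z : V) :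
    Nat.card {w : G.nbWalks (n + 1) x y // w.1 ⟨1, by omega⟩ = z} =
      if G.Adj x z then G.nbWalkCountAfter n x z y else 0 := by
  split_ifs with hxz
  · exact Nat.card_congr (nbWalksSuccFiberEquiv n hxz)
  · have : IsEmpty {w : G.nbWalks (n + 1) x y // w.1 ⟨1, by omega⟩ = z} :=
      ⟨fun ⟨w, hw⟩ => hxz (w.2.1 ▸ hw ▸ w.2.2.2.1 0 (by omega))⟩
    exact Nat.card_of_isEmpty

variable [Fintype V]

lemma nbWalkCount_succ (n : ℕ) (x y : V) :
    nbWalkCount G (n + 1) x y = ∑ z ∈ G.neighborFinset x, G.nbWalkCountAfter n x z y := by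
  rw [nbWalkCount_eq_card, ← Nat.card_congr (Equiv.sigmaFiberEquiv
    fun w : G.nbWalks (n + 1) x y => w.1 ⟨1, by omega⟩), Nat.card_sigma]
  simp_rw [card_nbWalks_succ_fiber, neighborFinset_eq_filter, sum_filter]

lemma sum_neighborFinset_nbWalkCountAfter_zero (x y : V) :
    ∑ z ∈ G.neighborFinset x, G.nbWalkCountAfter 0 z x y = G.degree x * nbWalkCount G 0 x y := by
  simp_rw [nbWalkCountAfter_zero, sum_const, card_neighborFinset_eq_degree, smul_eq_mul]

variable [DecidableEq V]

lemma nbWalkCount_succ_eq_add (n : ℕ) (x y p : V) :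
    nbWalkCount G (n + 1) x y =
      G.nbWalkCountAfter (n + 1) p x y + if G.Adj x p then G.nbWalkCountAfter n x p y else 0 := by
  rw [nbWalkCount_eq_card, ← Nat.card_congr (Equiv.sumCompl
    fun w : G.nbWalks (n + 1) x y => w.1 ⟨1, by omega⟩ = p), Nat.card_sum,
    card_nbWalks_succ_fiber, add_comm]
  congr 1
  exact Nat.card_congr (Equiv.subtypeEquivRight fun w => ⟨fun H _ => H, fun H => H (by omega)⟩)

lemma nbWalkCountAfter_succ (n : ℕ) (p x y : V) :
    G.nbWalkCountAfter (n + 1) p x y =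
      ∑ z ∈ (G.neighborFinset x).erase p, G.nbWalkCountAfter n x z y := by
  have h := nbWalkCount_succ_eq_add (G := G) n x y p
  rw [nbWalkCount_succ] at h
  split_ifs at h with hxp
  · rw [← sum_erase_add _ _ ((G.mem_neighborFinset x p).2 hxp)] at h
    omega
  · rw [erase_eq_of_notMem (mt (G.mem_neighborFinset x p).1 hxp)]
    omega

lemma nbWalkCountAfter_le (n : ℕ) {x z : V} (y : V) (hzx : G.Adj z x) :
    G.nbWalkCountAfter n x z y ≤ (G.maxDegree - 1) ^ n := by
  induction n generalizing x z with
  | zero =>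
    rw [nbWalkCountAfter_zero, nbWalkCount_zero]
    split_ifs <;> simp
  | succ n ih =>
    rw [nbWalkCountAfter_succ, pow_succ']
    calc _ ≤ ∑ _c ∈ (G.neighborFinset z).erase x, (G.maxDegree - 1) ^ n :=
          sum_le_sum fun c hc => ih ((G.mem_neighborFinset z c).1 (mem_of_mem_erase hc)).symm
      _ ≤ _ := by
        rw [sum_const, smul_eq_mul, card_erase_of_mem ((G.mem_neighborFinset z x).2 hzx),
          card_neighborFinset_eq_degree]
        exact Nat.mul_le_mul_right _ (Nat.sub_le_sub_right (G.degree_le_maxDegree z) 1)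

lemma nbWalkCount_succ_le (n : ℕ) (x y : V) :
    nbWalkCount G (n + 1) x y ≤ G.maxDegree * (G.maxDegree - 1) ^ n := by
  rw [nbWalkCount_succ]
  calc _ ≤ ∑ _z ∈ G.neighborFinset x, (G.maxDegree - 1) ^ n :=
        sum_le_sum fun z hz => nbWalkCountAfter_le n y ((G.mem_neighborFinset x z).1 hz).symm
    _ ≤ _ := by
      rw [sum_const, smul_eq_mul, card_neighborFinset_eq_degree]
      exact Nat.mul_le_mul_right _ (G.degree_le_maxDegree x)

lemma sum_neighborFinset_nbWalkCount_succ (n : ℕ) (x y : V) :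
    ∑ z ∈ G.neighborFinset x, nbWalkCount G (n + 1) z y =
      nbWalkCount G (n + 2) x y + ∑ z ∈ G.neighborFinset x, G.nbWalkCountAfter n z x y := by
  rw [nbWalkCount_succ (n + 1) x y, ← sum_add_distrib]
  refine sum_congr rfl fun z hz => ?_
  rw [nbWalkCount_succ_eq_add n z y x, if_pos ((G.mem_neighborFinset x z).1 hz).symm]

lemma sum_neighborFinset_nbWalkCountAfter_succ (n : ℕ) (x y : V) :
    ∑ z ∈ G.neighborFinset x, G.nbWalkCountAfter (n + 1) z x y + nbWalkCount G (n + 1) x y =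
      G.degree x * nbWalkCount G (n + 1) x y := by
  calc _ = ∑ z ∈ G.neighborFinset x,
        (G.nbWalkCountAfter (n + 1) z x y + G.nbWalkCountAfter n x z y) := by
        rw [sum_add_distrib, nbWalkCount_succ]
    _ = ∑ _z ∈ G.neighborFinset x, nbWalkCount G (n + 1) x y := sum_congr rfl fun z hz => by
        rw [nbWalkCount_succ_eq_add n x y z, if_pos ((G.mem_neighborFinset x z).1 hz)]
    _ = _ := by rw [sum_const, card_neighborFinset_eq_degree, smul_eq_mul]

lemma nbWalkMatrix_one [NonAssocSemiring R] : G.nbWalkMatrix R 1 = G.adjMatrix R := by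
  ext x y
  simp [nbWalkMatrix, nbWalkCount_succ, nbWalkCountAfter_zero, nbWalkCount_zero]

lemma adjMatrix_mul_nbWalkMatrix_one [NonAssocSemiring R] :
    G.adjMatrix R * G.nbWalkMatrix R 1 = G.nbWalkMatrix R 2 + G.degMatrix R := by
  ext x y
  have h := sum_neighborFinset_nbWalkCount_succ (G := G) 0 x y
  rw [sum_neighborFinset_nbWalkCountAfter_zero, nbWalkCount_zero, mul_ite, mul_one, mul_zero,
    zero_add, zero_add] at h
  simp only [adjMatrix_mul_apply, nbWalkMatrix, degMatrix, of_apply, Matrix.add_apply,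
    diagonal_apply]
  exact_mod_cast congrArg (Nat.cast (R := R)) h

lemma adjMatrix_mul_nbWalkMatrix_add_two [Ring R] (n : ℕ) :
    G.adjMatrix R * G.nbWalkMatrix R (n + 2) =
      G.nbWalkMatrix R (n + 3) + (G.degMatrix R - 1) * G.nbWalkMatrix R (n + 1) := by
  ext x y
  have h1 : ∑ z ∈ G.neighborFinset x, (nbWalkCount G (n + 2) z y : R) =
      nbWalkCount G (n + 3) x y +
        ∑ z ∈ G.neighborFinset x, (G.nbWalkCountAfter (n + 1) z x y : R) := by
    exact_mod_cast congrArg (Nat.cast (R := R))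
      (sum_neighborFinset_nbWalkCount_succ (G := G) (n + 1) x y)
  have h2 : ∑ z ∈ G.neighborFinset x, (G.nbWalkCountAfter (n + 1) z x y : R) =
      G.degree x * nbWalkCount G (n + 1) x y - nbWalkCount G (n + 1) x y := by
    refine eq_sub_of_add_eq ?_
    exact_mod_cast congrArg (Nat.cast (R := R))
      (sum_neighborFinset_nbWalkCountAfter_succ (G := G) n x y)
  simp only [adjMatrix_mul_apply, nbWalkMatrix, degMatrix, sub_mul, one_mul, of_apply,
    Matrix.add_apply, Matrix.sub_apply, diagonal_mul]
  rw [h1, h2]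

lemma summable_norm_pow_mul_nbWalkCount {𝕜 : Type*} [NormedRing 𝕜] [NormOneClass 𝕜] {u : 𝕜}
    (hu : ‖u‖ * ((G.maxDegree : ℝ) - 1) < 1) (x y : V) :
    Summable fun n => ‖u ^ n * (nbWalkCount G n x y : 𝕜)‖ := by
  have hr : ‖u‖ * ((G.maxDegree - 1 : ℕ) : ℝ) < 1 := by
    rcases Nat.eq_zero_or_pos G.maxDegree with h | h
    · simp [h]
    · rwa [Nat.cast_sub h, Nat.cast_one]
  rw [← summable_nat_add_iff 1]
  refine .of_nonneg_of_le (fun _ => norm_nonneg _) (fun n => ?_)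
    ((summable_geometric_of_lt_one (by positivity) hr).mul_left (‖u‖ * G.maxDegree))
  calc ‖u ^ (n + 1) * (nbWalkCount G (n + 1) x y : 𝕜)‖
      ≤ ‖u‖ ^ (n + 1) * nbWalkCount G (n + 1) x y :=
        (norm_mul_le _ _).trans (mul_le_mul (norm_pow_le _ _)
          ((Nat.norm_cast_le _).trans_eq (by rw [norm_one, mul_one])) (norm_nonneg _)
          (by positivity))
    _ ≤ ‖u‖ ^ (n + 1) * (G.maxDegree * (G.maxDegree - 1 : ℕ) ^ n) := by
        gcongr
        exact_mod_cast nbWalkCount_succ_le n x y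
    _ = ‖u‖ * G.maxDegree * (‖u‖ * ((G.maxDegree - 1 : ℕ) : ℝ)) ^ n := by ring

end SimpleGraph

theorem kernel_inverts_deformed_laplacian_general (G : SimpleGraph V) [Fintype V] [DecidableEq V]
    [DecidableRel G.Adj] (u : ℂ)
    (hu' : ‖u‖ * ((G.maxDegree : ℝ) - 1) < 1) :
    (∀ x y : V, Summable (fun n : ℕ => ‖u ^ n * (nbWalkCount G n x y : ℂ)‖)) ∧
    (1 - u • G.adjMatrix ℂ
        + (u ^ 2) • (Matrix.diagonal (fun x => (G.degree x : ℂ)) - 1)) *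
      (Matrix.of fun x y => ∑' n : ℕ, u ^ n * (nbWalkCount G n x y : ℂ)) =
      (1 - u ^ 2) • (1 : Matrix V V ℂ) := by
  have hsum := G.summable_norm_pow_mul_nbWalkCount hu'
  refine ⟨hsum, ?_⟩
  have hK : HasSum (fun n => u ^ n • G.nbWalkMatrix ℂ n)
      (Matrix.of fun x y => ∑' n : ℕ, u ^ n * (nbWalkCount G n x y : ℂ)) :=
    Pi.hasSum.2 fun x => Pi.hasSum.2 fun y => (hsum x y).of_norm.hasSum
  exact deformedLaplacian_mul_eq_of_hasSum hK G.nbWalkMatrix_zero G.nbWalkMatrix_one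
    G.adjMatrix_mul_nbWalkMatrix_one G.adjMatrix_mul_nbWalkMatrix_add_two

/-- For `|u| < 1` and `|u|·(Δ − 1) < 1`, the path-generating kernel
`K(x,y) = Σ_{n ≥ 0} uⁿ·M̃ₙ(x,y)` converges absolutely and satisfies
`(I − u·A + u²·(D − I))·K = (1 − u²)·I`. -/
theorem kernel_inverts_deformed_laplacian (G : SimpleGraph V) [Fintype V] [DecidableEq V]
    [DecidableRel G.Adj] (u : ℂ) (hu : ‖u‖ < 1)
    (hu' : ‖u‖ * ((G.maxDegree : ℝ) - 1) < 1) :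
    (∀ x y : V, Summable (fun n : ℕ => ‖u ^ n * (nbWalkCount G n x y : ℂ)‖)) ∧
    (1 - u • G.adjMatrix ℂ
        + (u ^ 2) • (Matrix.diagonal (fun x => (G.degree x : ℂ)) - 1)) *
      (Matrix.of fun x y => ∑' n : ℕ, u ^ n * (nbWalkCount G n x y : ℂ)) =
      (1 - u ^ 2) • (1 : Matrix V V ℂ) :=
  kernel_inverts_deformed_laplacian_general G u hu'
end

section
/- Let p ≥ 1 and let G be a connected acyclic simple graph in which every vertex has degree p + 1, and fix a vertex x₀. Let α₊, α₋ be complex numbers with α₊·α₋ = 1/p and α₊ ≠ α₋, and set a₊ = (p·α₊ − α₋)/((p+1)(α₊ − α₋)) and a₋ = (p·α₋ − α₊)/((p+1)(α₊ − α₋)). Define the spherical function ψ(x) = a₊·α₊^{dist(x,x₀)} − a₋·α₋^{dist(x,x₀)}. Then ψ(x₀) = 1 and ψ is an eigenfunction of the adjacency operator: for every vertex x, Σ_{y adjacent to x} ψ(y) = p·(α₊ + α₋)·ψ(x). -/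
/-!
On a tree, the value of a radial function `x ↦ φ (dist x₀ x)` summed over the neighbours of
`x ≠ x₀` is `φ (d - 1) + p φ (d + 1)` with `d = dist x₀ x`: exactly one neighbour (the next vertex
on the geodesic to `x₀`) is closer to `x₀`, and the other `p` are farther. At `x₀` it is
`(p + 1) φ 1`. For `φ n = a₊ α₊ⁿ - a₋ α₋ⁿ` the first identity holds for all `a₊, a₋` because
`α₊, α₋` are the roots of `p t² - p (α₊ + α₋) t + 1`, and the Harish-Chandra coefficients are
exactly what makes the second identity hold together with `φ 0 = 1`.
-/

open Finset

namespace SimpleGraph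

variable {V : Type*} {G : SimpleGraph V}

lemma Reachable.exists_adj_dist_add_one_eq {u v : V} (hr : G.Reachable u v) (hne : u ≠ v) :
    ∃ w, G.Adj v w ∧ G.dist u w + 1 = G.dist u v := by
  obtain ⟨p, hp⟩ := hr.exists_walk_length_eq_dist
  have hnil : ¬p.Nil := Walk.not_nil_of_ne hne
  refine ⟨p.penultimate, (p.adj_penultimate hnil).symm, ?_⟩
  have hle : G.dist u p.penultimate ≤ p.dropLast.length := dist_le _
  have hlen : p.dropLast.length + 1 = p.length := p.length_dropLast_add_one hnil
  have := (p.adj_penultimate hnil).diff_dist_adj (u := u)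
  omega

/-- Any such neighbour is the penultimate vertex of the unique path from `u` to `v`. -/
lemma IsAcyclic.eq_of_adj_of_dist_add_one_eq (hG : G.IsAcyclic) {u v w w' : V}
    (hw : G.Adj v w) (hw' : G.Adj v w') (h : G.dist u w + 1 = G.dist u v)
    (h' : G.dist u w' + 1 = G.dist u v) : w = w' := by
  classical
  have hr : G.Reachable u v := Reachable.of_dist_ne_zero (by omega)
  obtain ⟨p, hp, -⟩ := hr.exists_path_of_dist
  suffices key : ∀ w, G.Adj v w → G.dist u w + 1 = G.dist u v → w = p.penultimate from
    (key w hw h).trans (key w' hw' h').symm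
  intro w hw h
  obtain ⟨q, hq, hql⟩ := (hr.trans hw.reachable).exists_path_of_dist
  have hv : v ∉ q.support := fun hv => by
    have := (dist_le (q.takeUntil v hv)).trans (q.length_takeUntil_le_length hv)
    omega
  exact hG.eq_penultimate_of_adj_end hp hw
    (hG.mem_support_of_ne_mem_support_of_adj_of_isPath hp hq hw hv)

variable {M : Type*} [AddCommMonoid M]

lemma sum_neighborFinset_dist_self (f : ℕ → M) (u : V) [Fintype (G.neighborSet u)] :
    ∑ w ∈ G.neighborFinset u, f (G.dist u w) = G.degree u • f 1 := by
  rw [sum_congr rfl fun w hw => by rw [dist_eq_one_iff_adj.mpr ((mem_neighborFinset ..).mp hw)],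
    sum_const, card_neighborFinset_eq_degree]

lemma IsAcyclic.sum_neighborFinset_dist_of_dist_eq_add_one (hG : G.IsAcyclic) (f : ℕ → M)
    {u v : V} [Fintype (G.neighborSet v)] {d k : ℕ} (hd : G.dist u v = d + 1)
    (hk : G.degree v = k + 1) :
    ∑ w ∈ G.neighborFinset v, f (G.dist u w) = f d + k • f (d + 2) := by
  classical
  have hr : G.Reachable u v := Reachable.of_dist_ne_zero (by omega)
  obtain ⟨w₀, hw₀, hdw₀⟩ := hr.exists_adj_dist_add_one_eq (by rintro rfl; simp at hd)
  have hmem : w₀ ∈ G.neighborFinset v := (mem_neighborFinset ..).mpr hw₀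
  have hfar : ∀ w ∈ (G.neighborFinset v).erase w₀, G.dist u w = d + 2 := by
    intro w hw
    obtain ⟨hne, hw⟩ := mem_erase.mp hw
    have hw := (mem_neighborFinset ..).mp hw
    rcases hG.dist_eq_dist_add_one_of_adj_of_reachable u hw hr with hcl | hfa
    · exact absurd (hG.eq_of_adj_of_dist_add_one_eq hw hw₀ hcl.symm hdw₀) hne
    · omega
  have hnear : G.dist u w₀ = d := by omega
  rw [← add_sum_erase _ _ hmem, hnear, sum_congr rfl fun w hw => by rw [hfar w hw], sum_const,
    card_erase_of_mem hmem, card_neighborFinset_eq_degree, hk, Nat.add_sub_cancel]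

end SimpleGraph

lemma mul_pow_sub_mul_pow_recurrence {R : Type*} [CommRing R] {p α β : R}
    (h : p * (α * β) = 1) (a b : R) (n : ℕ) :
    (a * α ^ n - b * β ^ n) + p * (a * α ^ (n + 2) - b * β ^ (n + 2)) =
      p * (α + β) * (a * α ^ (n + 1) - b * β ^ (n + 1)) := by
  linear_combination (b * β ^ n - a * α ^ n) * h

/-- **Spherical function on the `(p+1)`-regular tree**: with `α₊·α₋ = 1/p` and the
Harish-Chandra coefficients `a₊ = (p·α₊ − α₋)/((p+1)(α₊ − α₋))`,
`a₋ = (p·α₋ − α₊)/((p+1)(α₊ − α₋))`, the function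
`ψ(x) = a₊·α₊^{dist(x,x₀)} − a₋·α₋^{dist(x,x₀)}` satisfies `ψ(x₀) = 1` and is an
eigenfunction of the adjacency operator with eigenvalue `p·(α₊ + α₋)`. -/
theorem spherical_function_eigen (p : ℕ) (hp : 1 ≤ p)
    (G : SimpleGraph V) [G.LocallyFinite]
    (hconn : G.Connected) (hacyc : G.IsAcyclic)
    (hreg : ∀ v : V, G.degree v = p + 1)
    (x₀ : V) (αp αm : ℂ) (hprod : αp * αm = 1 / (p : ℂ)) (hne : αp ≠ αm)
    (ap am : ℂ)
    (hap : ap = ((p : ℂ) * αp - αm) / (((p : ℂ) + 1) * (αp - αm)))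
    (ham : am = ((p : ℂ) * αm - αp) / (((p : ℂ) + 1) * (αp - αm)))
    (ψ : V → ℂ)
    (hψ : ∀ x : V, ψ x = ap * αp ^ G.dist x x₀ - am * αm ^ G.dist x x₀) :
    ψ x₀ = 1 ∧
    ∀ x : V, (∑ y ∈ G.neighborFinset x, ψ y) = (p : ℂ) * (αp + αm) * ψ x := by
  set φ : ℕ → ℂ := fun n => ap * αp ^ n - am * αm ^ n
  have hsub : αp - αm ≠ 0 := sub_ne_zero.mpr hne
  have hp0 : (p : ℂ) ≠ 0 := Nat.cast_ne_zero.mpr (by omega)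
  have hp1 : (p : ℂ) + 1 ≠ 0 := Nat.cast_add_one_ne_zero p
  have hroots : (p : ℂ) * (αp * αm) = 1 := by rw [hprod]; field_simp
  have hφ0 : φ 0 = 1 := by simp only [φ, hap, ham]; field_simp; ring
  have hφ1 : ((p + 1 : ℕ) : ℂ) * φ 1 = p * (αp + αm) := by
    simp only [φ, hap, ham]; push_cast; field_simp; ring
  have hψφ : ∀ x, ψ x = φ (G.dist x₀ x) := fun x => by rw [hψ, G.dist_comm]
  refine ⟨by rw [hψφ, SimpleGraph.dist_self, hφ0], fun x => ?_⟩
  simp_rw [hψφ]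
  by_cases hx : x = x₀
  · subst hx
    rw [G.sum_neighborFinset_dist_self φ, hreg, SimpleGraph.dist_self, hφ0, mul_one,
      nsmul_eq_mul, hφ1]
  · obtain ⟨d, hd⟩ := Nat.exists_eq_add_one.mpr (hconn.pos_dist_of_ne (Ne.symm hx))
    rw [hacyc.sum_neighborFinset_dist_of_dist_eq_add_one φ hd (hreg x), hd, nsmul_eq_mul]
    exact mul_pow_sub_mul_pow_recurrence hroots ap am d
end

section
/- Let G be a finite simple graph, n ≥ 1, and let U assign to every dart d an n×n complex matrix which is unitary and satisfies U(reversal of d) = (U d)⁻¹. Let μ be a real number and let φ, ψ : V → ℂⁿ satisfy the eigenvalue equations Σ_{d : tail d = x} (U d)·φ(head d) = μ·φ(x) and Σ_{d : tail d = x} (U d)·ψ(head d) = μ·ψ(x) for every vertex x. Define the s-Wronskian W on darts by W(d) = φ(tail d)* · (U d) · ψ(head d) + ψ(tail d)* · (U d) · φ(head d), where v* denotes the conjugate-transpose. Then the boundary of W vanishes at every vertex: for every vertex x, Σ_{d : tail d = x} W(d) = Σ_{d : head d = x} W(d). -/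
open Matrix

variable {V : Type*}

/-- The s-Wronskian of two `ℂⁿ`-valued vertex functions `φ, ψ` with respect to a
potential `U` on darts:
`W(d) = φ(tail d)* · (U d) · ψ(head d) + ψ(tail d)* · (U d) · φ(head d)`. -/
noncomputable def sWronskian (G : SimpleGraph V) (n : ℕ)
    (U : G.Dart → Matrix (Fin n) (Fin n) ℂ) (φ ψ : V → Fin n → ℂ) : G.Dart → ℂ :=
  fun d => star (φ d.fst) ⬝ᵥ (U d).mulVec (ψ d.snd)
    + star (ψ d.fst) ⬝ᵥ (U d).mulVec (φ d.snd)

private lemma star_dot_mulVec {n : ℕ} (A : Matrix (Fin n) (Fin n) ℂ) (u v : Fin n → ℂ) :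
    star (star u ⬝ᵥ A.mulVec v) = star v ⬝ᵥ Aᴴ.mulVec u := by
  simp only [dotProduct, Matrix.mulVec, Matrix.conjTranspose_apply, star_sum, star_mul',
    Pi.star_apply, star_star, Finset.mul_sum, Finset.sum_mul]
  rw [Finset.sum_comm]
  exact Finset.sum_congr rfl fun i _ => Finset.sum_congr rfl fun j _ => by ring

private lemma dot_sum {n : ℕ} {ι : Type*} (s : Finset ι) (v : Fin n → ℂ)
    (f : ι → Fin n → ℂ) : v ⬝ᵥ (∑ d ∈ s, f d) = ∑ d ∈ s, v ⬝ᵥ f d := by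
  simp only [dotProduct, Finset.sum_apply, Finset.mul_sum]
  exact Finset.sum_comm

/-- **Vanishing of the boundary of the s-Wronskian**: if `φ` and `ψ` are eigenfunctions,
with the same real eigenvalue `μ`, of the Hecke operator with a unitary potential `U`
satisfying `U(reversal d) = (U d)⁻¹`, then at every vertex the sum of the s-Wronskian
over outgoing darts equals its sum over incoming darts. -/
theorem sWronskian_boundary_eq_zero (G : SimpleGraph V) [Fintype V] [DecidableEq V]
    [DecidableRel G.Adj] (n : ℕ) (hn : 1 ≤ n)
    (U : G.Dart → Matrix (Fin n) (Fin n) ℂ)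
    (hUunit : ∀ d, (U d)ᴴ * U d = 1)
    (hUrev : ∀ d, U d.symm = (U d)⁻¹)
    (μ : ℝ) (φ ψ : V → Fin n → ℂ)
    (hφ : ∀ x : V,
      (∑ d ∈ Finset.univ.filter (fun d : G.Dart => d.fst = x), (U d).mulVec (φ d.snd))
        = (μ : ℂ) • φ x)
    (hψ : ∀ x : V,
      (∑ d ∈ Finset.univ.filter (fun d : G.Dart => d.fst = x), (U d).mulVec (ψ d.snd))
        = (μ : ℂ) • ψ x) :
    ∀ x : V,
      (∑ d ∈ Finset.univ.filter (fun d : G.Dart => d.fst = x), sWronskian G n U φ ψ d)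
        = ∑ d ∈ Finset.univ.filter (fun d : G.Dart => d.snd = x),
            sWronskian G n U φ ψ d := by
  intro x
  have hAdj : ∀ d : G.Dart, U d.symm = (U d)ᴴ := fun d => by
    rw [hUrev d, Matrix.inv_eq_left_inv (hUunit d)]
  -- the incoming sum is the star of the outgoing sum
  have hin : (∑ d ∈ Finset.univ.filter (fun d : G.Dart => d.snd = x),
      sWronskian G n U φ ψ d)
      = star (∑ d ∈ Finset.univ.filter (fun d : G.Dart => d.fst = x),
          sWronskian G n U φ ψ d) := by
    rw [star_sum]
    refine Finset.sum_nbij' (fun d => d.symm) (fun d => d.symm) ?_ ?_ ?_ ?_ ?_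
    · intro d hd
      simp only [Finset.mem_filter, Finset.mem_univ, true_and] at hd ⊢
      simp [SimpleGraph.Dart.symm, hd]
    · intro d hd
      simp only [Finset.mem_filter, Finset.mem_univ, true_and] at hd ⊢
      simp [SimpleGraph.Dart.symm, hd]
    · intro d _; exact SimpleGraph.Dart.symm_symm d
    · intro d _; exact SimpleGraph.Dart.symm_symm d
    · intro d _
      have h1 : d.symm.fst = d.snd := rfl
      have h2 : d.symm.snd = d.fst := rfl
      simp only [sWronskian, h1, h2, hAdj d, star_add, star_dot_mulVec,
        Matrix.conjTranspose_conjTranspose]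
      ring
  rw [hin]
  -- the outgoing sum is real
  have hout : (∑ d ∈ Finset.univ.filter (fun d : G.Dart => d.fst = x),
      sWronskian G n U φ ψ d)
      = (μ : ℂ) * (star (φ x) ⬝ᵥ ψ x + star (ψ x) ⬝ᵥ φ x) := by
    have hcongr : ∀ d ∈ Finset.univ.filter (fun d : G.Dart => d.fst = x),
        sWronskian G n U φ ψ d
          = star (φ x) ⬝ᵥ (U d).mulVec (ψ d.snd)
            + star (ψ x) ⬝ᵥ (U d).mulVec (φ d.snd) := by
      intro d hd
      simp only [Finset.mem_filter, Finset.mem_univ, true_and] at hd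
      simp [sWronskian, hd]
    rw [Finset.sum_congr rfl hcongr, Finset.sum_add_distrib, ← dot_sum, ← dot_sum,
      hφ x, hψ x, dotProduct_smul, dotProduct_smul, smul_eq_mul, smul_eq_mul]
    ring
  rw [hout, star_mul', star_add]
  have hsc : star (star (φ x) ⬝ᵥ ψ x) = star (ψ x) ⬝ᵥ φ x := by
    rw [Matrix.star_dotProduct, star_star]
  have hsc' : star (star (ψ x) ⬝ᵥ φ x) = star (φ x) ⬝ᵥ ψ x := by
    rw [Matrix.star_dotProduct, star_star]
  rw [hsc, hsc', Complex.star_def, Complex.conj_ofReal]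
  ring
end

section
/- Let G be a finite connected simple graph with |E| ≥ |V|, where |V| and |E| are the numbers of vertices and unoriented edges, and set g = |E| − |V| + 1 ≥ 1 (the number of independent loops of G). Then the polynomial det(I − u·B) in the variable u, where B is the non-backtracking edge-adjacency matrix of G, is divisible by (1 − u)^g · (1 + u)^{g−1}. In particular, the inverse Ihara–Selberg L-function L⁻¹(u) = det(I − u·B) has a zero of order at least g at u = 1 and a zero of order at least g − 1 at u = −1. -/
open Matrix Polynomial

variable {V : Type*}

/-- The non-backtracking edge-adjacency matrix with polynomial entries: the entry at
`(d', d)` is the variable `X` (standing for `u`) if `d'` follows `d` without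
backtracking, and `0` otherwise; thus `det(1 − nbPolyMatrix G)` is the polynomial
`det(I − u·B)` in the variable `u`. -/
noncomputable def nbPolyMatrix (G : SimpleGraph V) [Fintype V] [DecidableEq V] [DecidableRel G.Adj] :
    Matrix G.Dart G.Dart (Polynomial ℤ) :=
  fun d' d => if FollowsNB d' d then Polynomial.X else 0

/-! The vector spaces of functions `x` on darts with `x d̄ = -x d`, resp. `x d̄ = x d`, have
dimension `|E|`; requiring in addition that the sum of `x` over the darts entering each vertex
vanishes costs at most `|V| - 1`, resp. `|V|`, dimensions (for antisymmetric `x` the sum over all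
vertices vanishes automatically). Such `x` are eigenvectors of `B` for the eigenvalue `1`, resp.
`-1`, since `(B x)(d) = (inflow of x at the tail of d) - x d̄`. The geometric multiplicity of an
eigenvalue `a` bounds its algebraic multiplicity, so `(1 - a u)^mult` divides
`det (1 - u B)`, the reversed characteristic polynomial. The two factors are coprime over `ℚ`,
and Gauss's lemma brings the divisibility back to `ℤ`. -/

open Module

namespace Polynomial

theorem reverse_X_sub_C_pow {K : Type*} [Field K] (a : K) (k : ℕ) :
    ((X - C a) ^ k).reverse = (1 - C a * X) ^ k := by
  have hone : (1 : K[X]).reverse = 1 := by simpa using reverse_C (1 : K)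
  have hX : (X : K[X]).reverse = 1 := by simpa [hone] using reverse_X_mul (1 : K[X])
  have hlin : (X - C a).reverse = 1 - C a * X := by
    rw [sub_eq_add_neg, ← C_neg, reverse_add_C, hX, natDegree_X, pow_one, C_neg, neg_mul,
      ← sub_eq_add_neg]
  induction k with
  | zero => simpa using hone
  | succ k ih => rw [pow_succ, reverse_mul_of_domain, ih, hlin, pow_succ]

theorem isPrimitive_one_sub_X_pow_mul_one_add_X_pow {R : Type*} [CommRing R] (k m : ℕ) :
    ((1 - X : R[X]) ^ k * (1 + X) ^ m).IsPrimitive := by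
  refine isPrimitive_of_dvd
    (((monic_X_sub_C (1 : R)).pow k).mul ((monic_X_add_C (1 : R)).pow m)).isPrimitive
    ⟨(-1) ^ k, ?_⟩
  rw [C_1, show (X - 1 : R[X]) = (1 - X) * -1 by ring, mul_pow, add_comm X]
  ring

theorem isCoprime_one_sub_X_one_add_X {K : Type*} [Field K] [NeZero (2 : K)] :
    IsCoprime (1 - X : K[X]) (1 + X) :=
  ⟨C 2⁻¹, C 2⁻¹, by
    rw [← mul_add, sub_add_add_cancel, ← one_add_one_eq_two, ← C_1, ← C_add, ← C_mul,
      one_add_one_eq_two, inv_mul_cancel₀ two_ne_zero, C_1]⟩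

end Polynomial

namespace Matrix

variable {n : Type*} [Fintype n] [DecidableEq n]

theorem pow_finrank_eigenspace_dvd_charpolyRev {K : Type*} [Field K] (M : Matrix n n K) (a : K) :
    (1 - C a * X) ^ finrank K (End.eigenspace M.toLin' a) ∣ M.charpolyRev := by
  obtain ⟨q, hq⟩ := (pow_dvd_pow _ (LinearMap.finrank_eigenspace_le M.toLin' a)).trans
    (pow_rootMultiplicity_dvd M.toLin'.charpoly a)
  rw [← reverse_charpoly, ← charpoly_toLin', hq, reverse_mul_of_domain, reverse_X_sub_C_pow]
  exact dvd_mul_right _ _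

theorem charpolyRev_map {R S : Type*} [CommRing R] [CommRing S] (M : Matrix n n R)
    (f : R →+* S) : (M.map f).charpolyRev = M.charpolyRev.map f := by
  rw [charpolyRev, charpolyRev, ← coe_mapRingHom, RingHom.map_det]
  congr 1
  ext i j
  by_cases h : i = j <;> simp [h]

end Matrix

namespace SimpleGraph

def nbMatrix [DecidableEq V] (G : SimpleGraph V) (R : Type*) [Zero R] [One R] :
    Matrix G.Dart G.Dart R :=
  of fun d' d => if FollowsNB d' d then 1 else 0

theorem nbMatrix_map [DecidableEq V] (G : SimpleGraph V) {R S : Type*} [Zero R] [One R]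
    [Zero S] [One S] (f : R → S) (h0 : f 0 = 0) (h1 : f 1 = 1) :
    (G.nbMatrix R).map f = G.nbMatrix S := by
  ext d' d
  by_cases h : FollowsNB d' d <;> simp [nbMatrix, h, h0, h1]

theorem exists_dart_edge_eq {G : SimpleGraph V} {e : Sym2 V} (he : e ∈ G.edgeSet) :
    ∃ d : G.Dart, d.edge = e := by
  induction e with
  | _ u w => exact ⟨⟨(u, w), he⟩, rfl⟩

noncomputable def edgeDart (G : SimpleGraph V) [Fintype G.edgeSet] (e : G.edgeFinset) : G.Dart :=
  (exists_dart_edge_eq (mem_edgeFinset.mp e.2)).choose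

theorem edgeDart_edge (G : SimpleGraph V) [Fintype G.edgeSet] (e : G.edgeFinset) :
    (G.edgeDart e).edge = e :=
  (exists_dart_edge_eq (mem_edgeFinset.mp e.2)).choose_spec

variable {K : Type*} [Field K] (G : SimpleGraph V) [Fintype V] [DecidableEq V]
  [DecidableRel G.Adj]

theorem det_one_sub_nbPolyMatrix : det (1 - nbPolyMatrix G) = (G.nbMatrix ℤ).charpolyRev := by
  rw [charpolyRev]
  congr 1
  ext d' d
  by_cases h : FollowsNB d' d <;> simp [nbPolyMatrix, nbMatrix, h]

theorem mulVec_nbMatrix_apply (x : G.Dart → K) (d' : G.Dart) :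
    (G.nbMatrix K *ᵥ x) d' = ∑ d with d.snd = d'.fst, x d - x d'.symm := by
  have hfollow : ({d | FollowsNB d' d} : Finset G.Dart) =
      ({d | d.snd = d'.fst} : Finset G.Dart).erase d'.symm := by
    ext d
    rw [Finset.mem_filter, Finset.mem_erase, Finset.mem_filter, FollowsNB]
    have : d' = d.symm ↔ d = d'.symm := by
      constructor <;> rintro rfl <;> rw [Dart.symm_symm]
    simp only [Finset.mem_univ, true_and, ne_eq, this, eq_comm, and_comm]
  rw [← Finset.sum_erase_eq_sub (by simp [Dart.symm]), ← hfollow, Finset.sum_filter]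
  simp [nbMatrix, mulVec, dotProduct]

theorem nbMatrix_mulVec_eq_smul {a : K} {x : G.Dart → K} (hsymm : ∀ d, x d.symm = -a * x d)
    (hsum : ∀ v, ∑ d with d.snd = v, x d = 0) : G.nbMatrix K *ᵥ x = a • x := by
  ext d'
  rw [mulVec_nbMatrix_apply, hsum, hsymm, Pi.smul_apply, smul_eq_mul]
  ring

/-- For `a = ±1` the kernel consists of `a`-eigenvectors of `nbMatrix G K`, and it is cut out of
the `2|E|`-dimensional space of functions on darts by `|E| + |W|` linear conditions. -/
noncomputable def eigenConstraints (a : K) {W : Type*} (π : W → V) :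
    (G.Dart → K) →ₗ[K] (G.edgeFinset → K) × (W → K) :=
  (LinearMap.pi fun e =>
      LinearMap.proj (G.edgeDart e).symm + a • LinearMap.proj (G.edgeDart e)).prod
    (LinearMap.pi fun w => ∑ d with d.snd = π w, LinearMap.proj d)

variable {G}

theorem apply_symm_of_mem_ker_eigenConstraints {a : K} (ha : a * a = 1) {W : Type*}
    {π : W → V} {x : G.Dart → K} (hx : x ∈ LinearMap.ker (G.eigenConstraints a π))
    (d : G.Dart) : x d.symm = -a * x d := by
  have hedge (e : G.edgeFinset) : x (G.edgeDart e).symm + a * x (G.edgeDart e) = 0 := by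
    simpa [eigenConstraints] using congrFun (congrArg Prod.fst hx) e
  let e : G.edgeFinset := ⟨d.edge, mem_edgeFinset.mpr d.edge_mem⟩
  have he := hedge e
  rcases (dart_edge_eq_iff _ _).mp (G.edgeDart_edge e) with h | h
  · rw [h] at he
    linear_combination he
  · rw [h, Dart.symm_symm] at he
    linear_combination a * he - x d.symm * ha

theorem sum_head_eq_zero_of_mem_ker_eigenConstraints {a : K} {W : Type*} {π : W → V}
    {x : G.Dart → K} (hx : x ∈ LinearMap.ker (G.eigenConstraints a π)) (w : W) :
    ∑ d with d.snd = π w, x d = 0 := by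
  simpa [eigenConstraints] using congrFun (congrArg Prod.snd hx) w

theorem card_edgeFinset_le_finrank_ker_eigenConstraints (a : K) {W : Type*} [Fintype W]
    (π : W → V) :
    G.edgeFinset.card ≤ finrank K (LinearMap.ker (G.eigenConstraints a π)) + Fintype.card W := by
  have hrank := LinearMap.finrank_range_add_finrank_ker (G.eigenConstraints a π)
  have hrange := Submodule.finrank_le (LinearMap.range (G.eigenConstraints a π))
  rw [Module.finrank_prod, Module.finrank_pi, Module.finrank_pi, Fintype.card_coe] at hrange
  rw [Module.finrank_pi, dart_card_eq_twice_card_edges] at hrank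
  omega

theorem sum_head_eq_zero_of_forall_ne [NeZero (2 : K)] {x : G.Dart → K}
    (hsymm : ∀ d, x d.symm = -x d) {v₀ : V}
    (hsum : ∀ v ≠ v₀, ∑ d with d.snd = v, x d = 0) (v : V) : ∑ d with d.snd = v, x d = 0 := by
  have htotal : ∑ d, x d = 0 := by
    have hflip : ∑ d : G.Dart, x d.symm = ∑ d, x d :=
      Equiv.sum_comp (Function.Involutive.toPerm _ Dart.symm_involutive) x
    simp only [hsymm, Finset.sum_neg_distrib, neg_eq_iff_add_eq_zero, ← two_mul] at hflip
    exact (mul_eq_zero.mp hflip).resolve_left two_ne_zero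
  by_cases hv : v = v₀
  · subst hv
    rw [← Finset.sum_fiberwise Finset.univ (fun d : G.Dart => d.snd) x,
      Finset.sum_eq_single v (fun w _ hw => hsum w hw) (by simp)] at htotal
    exact htotal
  · exact hsum v hv

variable (G)

theorem card_edgeFinset_le_finrank_eigenspace_neg_one :
    G.edgeFinset.card ≤
      finrank K (End.eigenspace (G.nbMatrix K).toLin' (-1)) + Fintype.card V := by
  have hker : LinearMap.ker (G.eigenConstraints (-1 : K) id) ≤
      End.eigenspace (G.nbMatrix K).toLin' (-1) := fun x hx => by
    rw [End.mem_eigenspace_iff, toLin'_apply]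
    exact G.nbMatrix_mulVec_eq_smul (apply_symm_of_mem_ker_eigenConstraints (by norm_num) hx)
      (sum_head_eq_zero_of_mem_ker_eigenConstraints hx)
  have := Submodule.finrank_mono hker
  have := card_edgeFinset_le_finrank_ker_eigenConstraints (G := G) (-1 : K) id
  omega

theorem card_edgeFinset_add_one_le_finrank_eigenspace_one [NeZero (2 : K)] [Nonempty V] :
    G.edgeFinset.card + 1 ≤
      finrank K (End.eigenspace (G.nbMatrix K).toLin' 1) + Fintype.card V := by
  let v₀ : V := Classical.arbitrary V
  have hker : LinearMap.ker (G.eigenConstraints (1 : K) (Subtype.val : {v // v ≠ v₀} → V)) ≤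
      End.eigenspace (G.nbMatrix K).toLin' 1 := fun x hx => by
    have hsymm (d : G.Dart) : x d.symm = -x d := by
      simpa using apply_symm_of_mem_ker_eigenConstraints (one_mul 1) hx d
    rw [End.mem_eigenspace_iff, toLin'_apply]
    exact G.nbMatrix_mulVec_eq_smul (by simpa using hsymm)
      (sum_head_eq_zero_of_forall_ne hsymm fun v hv =>
        sum_head_eq_zero_of_mem_ker_eigenConstraints hx ⟨v, hv⟩)
  have := Submodule.finrank_mono hker
  have := card_edgeFinset_le_finrank_ker_eigenConstraints (G := G) (1 : K)
    (Subtype.val : {v // v ≠ v₀} → V)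
  have : Fintype.card {v // v ≠ v₀} + 1 = Fintype.card V := by
    simpa using Nat.sub_add_cancel (Fintype.card_pos (α := V))
  omega

theorem one_sub_X_pow_mul_one_add_X_pow_dvd_charpolyRev_nbMatrix [NeZero (2 : K)] [Nonempty V]
    (hE : Fintype.card V ≤ G.edgeFinset.card) :
    (1 - X : K[X]) ^ (G.edgeFinset.card - Fintype.card V + 1) *
        (1 + X) ^ (G.edgeFinset.card - Fintype.card V) ∣ (G.nbMatrix K).charpolyRev := by
  have hone : (1 - X : K[X]) ^ (G.edgeFinset.card - Fintype.card V + 1) ∣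
      (G.nbMatrix K).charpolyRev := by
    have hdim := G.card_edgeFinset_add_one_le_finrank_eigenspace_one (K := K)
    have hdvd := (G.nbMatrix K).pow_finrank_eigenspace_dvd_charpolyRev 1
    rw [C_1, one_mul] at hdvd
    exact (pow_dvd_pow _ (by omega)).trans hdvd
  have hneg : (1 + X : K[X]) ^ (G.edgeFinset.card - Fintype.card V) ∣
      (G.nbMatrix K).charpolyRev := by
    have hdim := G.card_edgeFinset_le_finrank_eigenspace_neg_one (K := K)
    have hdvd := (G.nbMatrix K).pow_finrank_eigenspace_dvd_charpolyRev (-1)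
    rw [C_neg, C_1, neg_one_mul, sub_neg_eq_add] at hdvd
    exact (pow_dvd_pow _ (by omega)).trans hdvd
  exact isCoprime_one_sub_X_one_add_X.pow.mul_dvd hone hneg

end SimpleGraph

/-- For a finite connected simple graph with `|E| ≥ |V|` and `g = |E| − |V| + 1`, the
polynomial `det(I − u·B)` is divisible by `(1 − u)^g · (1 + u)^{g−1}`; in particular the
inverse Ihara–Selberg L-function has a zero of order at least `g` at `u = 1` and of
order at least `g − 1` at `u = −1`. -/
theorem L_function_zeros (G : SimpleGraph V) [Fintype V] [DecidableEq V]
    [DecidableRel G.Adj] (hconn : G.Connected)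
    (hE : Fintype.card V ≤ G.edgeFinset.card) :
    (1 - Polynomial.X : Polynomial ℤ) ^ (G.edgeFinset.card - Fintype.card V + 1) *
        (1 + Polynomial.X) ^ (G.edgeFinset.card - Fintype.card V) ∣
      Matrix.det (1 - nbPolyMatrix G) := by
  have : Nonempty V := hconn.nonempty
  rw [G.det_one_sub_nbPolyMatrix, IsPrimitive.Int.dvd_iff_map_cast_dvd_map_cast _ _
    (isPrimitive_one_sub_X_pow_mul_one_add_X_pow _ _), ← charpolyRev_map,
    G.nbMatrix_map _ (map_zero _) (map_one _)]
  simpa using G.one_sub_X_pow_mul_one_add_X_pow_dvd_charpolyRev_nbMatrix (K := ℚ) hE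
end
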